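/- arXiv:1802.10107 — 2 statements merged into one kernel-verified Lean document; each statement's English description precedes it below -/
import Mathlib

section
/- For each j∈I the coordinate projection Proj_I is mutation-linear: if I is a subset of the indices of B and Σ c_i v_i is a B-coherent linear relation in ℝ^n, then Σ c_i Proj_I(v_i) is a B_I-coherent linear relation in ℝ^I. -/
open scoped Classical

/-- A skew-symmetrizable integer matrix (an exchange matrix). -/
def SkewSymmetrizable {ι : Type*} (B : Matrix ι ι ℤ) : Prop :=
  ∃ d : ι → ℤ, (∀ i, 0 < d i) ∧ ∀ i j, d i * B i j = -(d j * B j i)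

/-- Matrix mutation at index `k`. -/
def mutate {ι : Type*} [DecidableEq ι] (B : Matrix ι ι ℤ) (k : ι) : Matrix ι ι ℤ :=
  Matrix.of fun i j =>
    if i = k ∨ j = k then -B i j
    else B i j + Int.sign (B k j) * max 0 (B i k * B k j)

/-- Iterated matrix mutation along a sequence (the head of the list is
applied last). -/
def mutateSeq {ι : Type*} [DecidableEq ι] (B : Matrix ι ι ℤ) :
    List ι → Matrix ι ι ℤ
  | [] => B
  | k :: ks => mutate (mutateSeq B ks) k

/-- The mutation map `η_k^B`. -/
noncomputable def eta {ι : Type*} [DecidableEq ι] (B : Matrix ι ι ℤ) (k : ι)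
    (a : ι → ℝ) : ι → ℝ :=
  fun j =>
    if j = k then -a k
    else if 0 ≤ a k ∧ 0 ≤ B k j then a j + a k * (B k j : ℝ)
    else if a k ≤ 0 ∧ B k j ≤ 0 then a j - a k * (B k j : ℝ)
    else a j

/-- The composed mutation map for a sequence of indices. -/
noncomputable def etaSeq {ι : Type*} [DecidableEq ι] (B : Matrix ι ι ℤ) :
    List ι → (ι → ℝ) → (ι → ℝ)
  | [] => id
  | k :: ks => fun a => eta (mutateSeq B ks) k (etaSeq B ks a)

/-- A `B`-coherent linear relation `Σ_{i ∈ S} c_i v_i`. -/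
def IsBCoherent {ι : Type*} [DecidableEq ι] {σ : Type} (B : Matrix ι ι ℤ)
    (S : Finset σ) (c : σ → ℝ) (v : σ → ι → ℝ) : Prop :=
  ∀ ks : List ι,
    (∑ i ∈ S, c i • etaSeq B ks (v i)) = (0 : ι → ℝ) ∧
    (∑ i ∈ S, c i • (fun j => min (etaSeq B ks (v i) j) 0 : ι → ℝ)) = (0 : ι → ℝ)

/-! Mutation at an index `f k` and the map `η_{f k}` only involve entries indexed by the image
of `f`, so restricting along an injective `f` commutes with them; the coherence identities for
`B_I` are then coordinates of those for `B`. -/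

variable {ι κ : Type*} [DecidableEq ι] [DecidableEq κ] {f : κ → ι}

theorem mutate_submatrix (hf : Function.Injective f) (B : Matrix ι ι ℤ) (k : κ) :
    mutate (B.submatrix f f) k = (mutate B (f k)).submatrix f f := by
  ext i j
  simp only [mutate, Matrix.of_apply, Matrix.submatrix_apply, hf.eq_iff]

theorem mutateSeq_submatrix (hf : Function.Injective f) (B : Matrix ι ι ℤ) (ks : List κ) :
    mutateSeq (B.submatrix f f) ks = (mutateSeq B (ks.map f)).submatrix f f := by
  induction ks with
  | nil => rfl
  | cons k ks ih => simp only [mutateSeq, List.map_cons, ih, mutate_submatrix hf]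

theorem eta_submatrix (hf : Function.Injective f) (B : Matrix ι ι ℤ) (k : κ) (a : ι → ℝ) :
    eta (B.submatrix f f) k (a ∘ f) = eta B (f k) a ∘ f := by
  funext j
  simp only [eta, Matrix.submatrix_apply, Function.comp_apply]
  exact if_congr hf.eq_iff.symm rfl rfl

theorem etaSeq_submatrix (hf : Function.Injective f) (B : Matrix ι ι ℤ) (ks : List κ)
    (a : ι → ℝ) :
    etaSeq (B.submatrix f f) ks (a ∘ f) = etaSeq B (ks.map f) a ∘ f := by
  induction ks with
  | nil => rfl
  | cons k ks ih =>
    simp only [etaSeq, List.map_cons, ih, mutateSeq_submatrix hf, eta_submatrix hf]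

theorem IsBCoherent.submatrix {σ : Type} {B : Matrix ι ι ℤ} {S : Finset σ} {c : σ → ℝ}
    {v : σ → ι → ℝ} (h : IsBCoherent B S c v) (hf : Function.Injective f) :
    IsBCoherent (B.submatrix f f) S c (fun s => v s ∘ f) := by
  intro ks
  obtain ⟨hsum, hmin⟩ := h (ks.map f)
  refine ⟨funext fun j => ?_, funext fun j => ?_⟩
  · simpa [etaSeq_submatrix hf, Finset.sum_apply] using congrFun hsum (f j)
  · simpa [etaSeq_submatrix hf, Finset.sum_apply] using congrFun hmin (f j)

theorem proj_mutationLinear_general {n : ℕ} (B : Matrix (Fin n) (Fin n) ℤ)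
    (I : Set (Fin n)) {σ : Type}
    (S : Finset σ) (c : σ → ℝ) (v : σ → Fin n → ℝ)
    (h : IsBCoherent B S c v) :
    IsBCoherent (B.submatrix (Subtype.val : I → Fin n) Subtype.val) S c
      (fun s => fun i : I => v s i.val) :=
  h.submatrix Subtype.val_injective

/-- The coordinate projection `Proj_I` is mutation-linear: it sends every
`B`-coherent linear relation to a `B_I`-coherent linear relation, where `B_I`
is the principal submatrix of `B` on the index set `I`. -/
theorem proj_mutationLinear {n : ℕ} (B : Matrix (Fin n) (Fin n) ℤ)
    (hB : SkewSymmetrizable B) (I : Set (Fin n)) {σ : Type}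
    (S : Finset σ) (c : σ → ℝ) (v : σ → Fin n → ℝ)
    (h : IsBCoherent B S c v) :
    IsBCoherent (B.submatrix (Subtype.val : I → Fin n) Subtype.val) S c
      (fun s => fun i : I => v s i.val) :=
  proj_mutationLinear_general B I S c v h
end

section
/- For 2×2 exchange matrices B = [[0,a],[b,0]] and B' = [[0,c],[d,0]] of wild type (ab ≤ -4 and cd ≤ -4, with a,c > 0 and b,d < 0), if the two irrational limiting slopes agree, i.e. a(√(-ab)+√(-ab-4))/(2√(-ab)) = c(√(-cd)+√(-cd-4))/(2√(-cd)) and 2√(-ab)/(b(√(-ab)+√(-ab-4))) = 2√(-cd)/(d(√(-cd)+√(-cd-4))), and ab < -4, then a = c and b = d. -/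
/-!
Write `r = √(-ab)` and `q = √(-ab - 4)`. Since `r² - q² = 4` and `r² = -ab`, the two slopes are
`s = a/2 - rq/(2b)` and `t = -a/2 - rq/(2b)`. Hence `s - t = a`, and squaring `s + t = -rq/b`
gives `b((s + t)² - a²) = 4a`, so the pair of slopes determines `a` and then `b`.
-/

open Real

noncomputable def wildSlopePos (a b : ℝ) : ℝ :=
  a * (√(-(a * b)) + √(-(a * b) - 4)) / (2 * √(-(a * b)))

noncomputable def wildSlopeNeg (a b : ℝ) : ℝ :=
  2 * √(-(a * b)) / (b * (√(-(a * b)) + √(-(a * b) - 4)))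

section WildSlopes

variable {a b : ℝ}

lemma wildSlopePos_eq (hab : a * b ≤ -4) :
    wildSlopePos a b = a / 2 - √(-(a * b)) * √(-(a * b) - 4) / (2 * b) := by
  have hr : 0 < √(-(a * b)) := sqrt_pos.mpr (by linarith)
  have hr2 : √(-(a * b)) ^ 2 = -(a * b) := sq_sqrt (by linarith)
  have hb : b ≠ 0 := by rintro rfl; linarith
  rw [wildSlopePos]
  field_simp
  linear_combination √(-(a * b) - 4) * hr2

lemma wildSlopeNeg_eq (hab : a * b ≤ -4) :
    wildSlopeNeg a b = -(a / 2) - √(-(a * b)) * √(-(a * b) - 4) / (2 * b) := by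
  have hr : 0 < √(-(a * b)) := sqrt_pos.mpr (by linarith)
  have hr2 : √(-(a * b)) ^ 2 = -(a * b) := sq_sqrt (by linarith)
  have hq2 : √(-(a * b) - 4) ^ 2 = -(a * b) - 4 := sq_sqrt (by linarith)
  have hb : b ≠ 0 := by rintro rfl; linarith
  have hrq : √(-(a * b)) + √(-(a * b) - 4) ≠ 0 := by positivity
  rw [wildSlopeNeg]
  field_simp
  linear_combination √(-(a * b) - 4) * hr2 + √(-(a * b)) * hq2

lemma wildSlopePos_sub_wildSlopeNeg (hab : a * b ≤ -4) :
    wildSlopePos a b - wildSlopeNeg a b = a := by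
  rw [wildSlopePos_eq hab, wildSlopeNeg_eq hab]
  ring

lemma mul_wildSlopePos_add_wildSlopeNeg_sq_sub_sq (hab : a * b ≤ -4) :
    b * ((wildSlopePos a b + wildSlopeNeg a b) ^ 2 - a ^ 2) = 4 * a := by
  have hr2 : √(-(a * b)) ^ 2 = -(a * b) := sq_sqrt (by linarith)
  have hq2 : √(-(a * b) - 4) ^ 2 = -(a * b) - 4 := sq_sqrt (by linarith)
  have hb : b ≠ 0 := by rintro rfl; linarith
  have hsum : wildSlopePos a b + wildSlopeNeg a b = -(√(-(a * b)) * √(-(a * b) - 4) / b) := by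
    rw [wildSlopePos_eq hab, wildSlopeNeg_eq hab]
    ring
  rw [hsum, neg_sq, div_pow, mul_pow, hr2, hq2]
  field_simp
  ring

end WildSlopes

theorem wild_slopes_determine_general (a b c d : ℤ)
    (hab : a * b ≤ -4) (hcd : c * d ≤ -4)
    (h1 : (a : ℝ) * (Real.sqrt (-((a : ℝ) * b)) + Real.sqrt (-((a : ℝ) * b) - 4)) /
            (2 * Real.sqrt (-((a : ℝ) * b)))
        = (c : ℝ) * (Real.sqrt (-((c : ℝ) * d)) + Real.sqrt (-((c : ℝ) * d) - 4)) /
            (2 * Real.sqrt (-((c : ℝ) * d))))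
    (h2 : 2 * Real.sqrt (-((a : ℝ) * b)) /
            ((b : ℝ) * (Real.sqrt (-((a : ℝ) * b)) + Real.sqrt (-((a : ℝ) * b) - 4)))
        = 2 * Real.sqrt (-((c : ℝ) * d)) /
            ((d : ℝ) * (Real.sqrt (-((c : ℝ) * d)) + Real.sqrt (-((c : ℝ) * d) - 4)))) :
    a = c ∧ b = d := by
  have habR : (a : ℝ) * b ≤ -4 := by exact_mod_cast hab
  have hcdR : (c : ℝ) * d ≤ -4 := by exact_mod_cast hcd
  have hs : wildSlopePos a b = wildSlopePos c d := h1
  have ht : wildSlopeNeg a b = wildSlopeNeg c d := h2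
  have hac : (a : ℝ) = c := by
    rw [← wildSlopePos_sub_wildSlopeNeg habR, ← wildSlopePos_sub_wildSlopeNeg hcdR, hs, ht]
  have ha : (a : ℝ) ≠ 0 := by rintro h; rw [h, zero_mul] at habR; linarith
  have hb := mul_wildSlopePos_add_wildSlopeNeg_sq_sub_sq habR
  have hd := mul_wildSlopePos_add_wildSlopeNeg_sq_sub_sq hcdR
  rw [hs, ht, hac] at hb
  have hK : (wildSlopePos c d + wildSlopeNeg c d) ^ 2 - (c : ℝ) ^ 2 ≠ 0 := by
    intro h
    rw [h, mul_zero, ← hac] at hd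
    exact ha (by linarith)
  have hbd : (b : ℝ) = d := mul_right_cancel₀ hK (hb.trans hd.symm)
  exact ⟨by exact_mod_cast hac, by exact_mod_cast hbd⟩

/-- For wild-type 2×2 exchange matrices `[[0,a],[b,0]]` and `[[0,c],[d,0]]`
(with `a,c > 0`, `b,d < 0`, `ab ≤ -4`, `cd ≤ -4`, and `ab < -4`), if the two
irrational limiting slopes agree then `a = c` and `b = d`. -/
theorem wild_slopes_determine (a b c d : ℤ)
    (ha : 0 < a) (hb : b < 0) (hc : 0 < c) (hd : d < 0)
    (hab : a * b ≤ -4) (hcd : c * d ≤ -4) (hab' : a * b < -4)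
    (h1 : (a : ℝ) * (Real.sqrt (-((a : ℝ) * b)) + Real.sqrt (-((a : ℝ) * b) - 4)) /
            (2 * Real.sqrt (-((a : ℝ) * b)))
        = (c : ℝ) * (Real.sqrt (-((c : ℝ) * d)) + Real.sqrt (-((c : ℝ) * d) - 4)) /
            (2 * Real.sqrt (-((c : ℝ) * d))))
    (h2 : 2 * Real.sqrt (-((a : ℝ) * b)) /
            ((b : ℝ) * (Real.sqrt (-((a : ℝ) * b)) + Real.sqrt (-((a : ℝ) * b) - 4)))
        = 2 * Real.sqrt (-((c : ℝ) * d)) /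
            ((d : ℝ) * (Real.sqrt (-((c : ℝ) * d)) + Real.sqrt (-((c : ℝ) * d) - 4)))) :
    a = c ∧ b = d :=
  wild_slopes_determine_general a b c d hab hcd h1 h2
end
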